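/- arXiv:1003.5073 — 4 statements merged into one kernel-verified Lean document; each statement's English description precedes it below -/
import Mathlib

section
/- Let W be a nonnegative real random variable such that for all t > 0, P(W ≤ t) = ∫₀ᵗ P(W > t − v) · v^(−1/α) dv, where α ∈ (1,2] and 1/α + 1/β = 1. Then for every s > 0, the Laplace transform satisfies E[e^(−sW)] = 1 / (1 + c_β s^(1/β)) with c_β = 1/Γ(1/β). -/
open MeasureTheory Set
open scoped ENNReal

/-!
Write `F t = P(W ≤ t)`, `G t = P(W > t)` and `𝓛 f = ∫₀^∞ e^{-st} f t dt`. The hypothesis says that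
`F = G ∗ k` on `(0, ∞)` with `k v = v^{1/β - 1}`, so `𝓛 F = 𝓛 G · 𝓛 k = 𝓛 G · Γ(1/β) s^{-1/β}`,
while `F + G = 1` gives `𝓛 F + 𝓛 G = 1/s`; this determines `𝓛 G`. By the layer-cake formula
`E[e^{-sW}] = 1 - s · 𝓛 G`.
-/

theorem lintegral_lintegral_sub_mul {G : Type*} [AddGroup G] [MeasurableSpace G]
    [MeasurableAdd₂ G] [MeasurableNeg G] (μ : Measure G) [SFinite μ] [μ.IsAddRightInvariant]
    {f g : G → ℝ≥0∞} (hf : Measurable f) (hg : Measurable g) :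
    ∫⁻ t, ∫⁻ v, f (t - v) * g v ∂μ ∂μ = (∫⁻ t, f t ∂μ) * ∫⁻ v, g v ∂μ := by
  rw [lintegral_lintegral_swap ((hf.comp measurable_sub).mul (hg.comp measurable_snd)).aemeasurable,
    ← lintegral_const_mul _ hg]
  refine lintegral_congr fun v => ?_
  rw [lintegral_mul_const _ (by fun_prop), lintegral_sub_right_eq_self]

theorem ofReal_integral_toReal_mul_eq_lintegral {α : Type*} [MeasurableSpace α]
    {μ : Measure α} {f : α → ℝ≥0∞} {g : α → ℝ} (hf : AEMeasurable f μ)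
    (hf1 : ∀ᵐ x ∂μ, f x ≤ 1) (hg : Integrable g μ) (hg0 : 0 ≤ᵐ[μ] g) :
    ENNReal.ofReal (∫ x, (f x).toReal * g x ∂μ) = ∫⁻ x, f x * ENNReal.ofReal (g x) ∂μ := by
  have hint : Integrable (fun x => (f x).toReal * g x) μ := by
    refine hg.mono' (hf.ennreal_toReal.aestronglyMeasurable.mul hg.1) ?_
    filter_upwards [hf1, hg0] with x hx hx0
    rw [norm_mul, Real.norm_of_nonneg ENNReal.toReal_nonneg, Real.norm_of_nonneg hx0]
    exact mul_le_of_le_one_left hx0 (ENNReal.toReal_le_of_le_ofReal zero_le_one (by simpa))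
  rw [ofReal_integral_eq_lintegral_ofReal hint
    (by filter_upwards [hg0] with x hx using mul_nonneg ENNReal.toReal_nonneg hx)]
  refine lintegral_congr_ae ?_
  filter_upwards [hf1] with x hx
  rw [ENNReal.ofReal_mul ENNReal.toReal_nonneg,
    ENNReal.ofReal_toReal (ne_top_of_le_ne_top ENNReal.one_ne_top hx)]

theorem ENNReal.toReal_eq_div_of_mul_ofReal_add_self {B : ℝ≥0∞} {c d : ℝ} (hc : 0 ≤ c)
    (hd : 0 ≤ d) (h : B * ENNReal.ofReal c + B = ENNReal.ofReal d) :
    B.toReal = d / (c + 1) := by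
  have hB : B ≠ ⊤ := ne_top_of_le_ne_top ENNReal.ofReal_ne_top (h ▸ le_add_self)
  have h' := congrArg ENNReal.toReal h
  rw [ENNReal.toReal_add (ENNReal.mul_ne_top hB ENNReal.ofReal_ne_top) hB, ENNReal.toReal_mul,
    ENNReal.toReal_ofReal hc, ENNReal.toReal_ofReal hd] at h'
  rw [_root_.eq_div_iff (by positivity), ← h']
  ring

noncomputable def lintegralLaplace (f : ℝ → ℝ≥0∞) (s : ℝ) : ℝ≥0∞ :=
  ∫⁻ t in Ioi 0, ENNReal.ofReal (Real.exp (-(s * t))) * f t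

theorem lintegralLaplace_congr {f g : ℝ → ℝ≥0∞} (h : EqOn f g (Ioi 0)) (s : ℝ) :
    lintegralLaplace f s = lintegralLaplace g s :=
  setLIntegral_congr_fun measurableSet_Ioi fun t ht => by rw [h ht]

theorem lintegralLaplace_add {f : ℝ → ℝ≥0∞} (hf : Measurable f) (g : ℝ → ℝ≥0∞) (s : ℝ) :
    lintegralLaplace (f + g) s = lintegralLaplace f s + lintegralLaplace g s := by
  simp only [lintegralLaplace, Pi.add_apply, mul_add]
  exact lintegral_add_left (by fun_prop) _

theorem lintegralLaplace_rpow {a s : ℝ} (ha : 0 < a) (hs : 0 < s) :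
    lintegralLaplace (fun v => ENNReal.ofReal (v ^ (a - 1))) s
      = ENNReal.ofReal ((1 / s) ^ a * Real.Gamma a) := by
  have hint : IntegrableOn (fun v : ℝ => v ^ (a - 1) * Real.exp (-(s * v))) (Ioi 0) := by
    simpa [Real.rpow_one] using
      integrableOn_rpow_mul_exp_neg_mul_rpow (p := 1) (by linarith) one_pos hs
  rw [← Real.integral_rpow_mul_exp_neg_mul_Ioi ha hs, ofReal_integral_eq_lintegral_ofReal hint
    ((ae_restrict_iff' measurableSet_Ioi).2 (ae_of_all _ fun v hv =>
      mul_nonneg (Real.rpow_nonneg (le_of_lt hv) _) (Real.exp_pos _).le))]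
  refine setLIntegral_congr_fun measurableSet_Ioi fun v hv => ?_
  rw [ENNReal.ofReal_mul (Real.rpow_nonneg (le_of_lt hv) _), mul_comm]

theorem lintegralLaplace_one {s : ℝ} (hs : 0 < s) :
    lintegralLaplace (fun _ => 1) s = ENNReal.ofReal (1 / s) := by
  simpa using lintegralLaplace_rpow one_pos hs

theorem lintegralLaplace_conv {f g : ℝ → ℝ≥0∞} (hf : Measurable f) (hg : Measurable g) (s : ℝ) :
    lintegralLaplace (fun t => ∫⁻ v in Ioo 0 t, f (t - v) * g v) s
      = lintegralLaplace f s * lintegralLaplace g s := by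
  set e : (ℝ → ℝ≥0∞) → ℝ → ℝ≥0∞ :=
    fun h => (Ioi 0).indicator fun t => ENNReal.ofReal (Real.exp (-(s * t))) * h t
  have he : ∀ h, lintegralLaplace h s = ∫⁻ t, e h t :=
    fun h => (lintegral_indicator measurableSet_Ioi _).symm
  have hem : ∀ {h}, Measurable h → Measurable (e h) :=
    fun hh => (by fun_prop : Measurable _).indicator measurableSet_Ioi
  -- `e h` is the weighted `h` extended by zero to all of `ℝ`; since
  -- `e^{-st} = e^{-s(t-v)} e^{-sv}`, the full-line convolution of `e f` and `e g` is `e` of the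
  -- convolution over `Ioo 0 t`.
  have hsplit : ∀ t v, e f (t - v) * e g v = (Ioo 0 t).indicator
      (fun v => ENNReal.ofReal (Real.exp (-(s * t))) * (f (t - v) * g v)) v := by
    intro t v
    simp only [e]
    by_cases hv : v ∈ Ioo 0 t
    · have htv : t - v ∈ Ioi 0 := sub_pos.2 hv.2
      rw [indicator_of_mem hv, indicator_of_mem htv, indicator_of_mem (mem_Ioi.2 hv.1),
        show -(s * t) = -(s * (t - v)) + -(s * v) by ring, Real.exp_add,
        ENNReal.ofReal_mul (Real.exp_pos _).le]
      ring
    · rw [indicator_of_notMem hv]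
      rcases not_and_or.1 hv with hv0 | hvt
      · rw [indicator_of_notMem (by simpa using hv0 : v ∉ Ioi 0), mul_zero]
      · rw [indicator_of_notMem (by simpa using hvt : t - v ∉ Ioi 0), zero_mul]
  rw [he, he, he, ← lintegral_lintegral_sub_mul volume (hem hf) (hem hg)]
  refine lintegral_congr fun t => ?_
  simp_rw [hsplit]
  rw [lintegral_indicator measurableSet_Ioo, lintegral_const_mul' _ _ ENNReal.ofReal_ne_top]
  simp only [e]
  by_cases ht : t ∈ Ioi 0
  · rw [indicator_of_mem ht]
  · rw [indicator_of_notMem ht, Ioo_eq_empty (by simpa using ht), Measure.restrict_empty,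
      lintegral_zero_measure, mul_zero]

theorem integral_exp_neg_mul_eq_sub_lintegralLaplace {α : Type*} [MeasurableSpace α]
    (μ : Measure α) [IsFiniteMeasure μ] {W : α → ℝ} (hW : Measurable W) (hW0 : ∀ ω, 0 ≤ W ω)
    {s : ℝ} (hs : 0 ≤ s) :
    ∫ ω, Real.exp (-(s * W ω)) ∂μ
      = μ.real univ - s * (lintegralLaplace (fun t => μ {ω | t < W ω}) s).toReal := by
  have hprim : ∀ w, ∫ t in 0..w, s * Real.exp (-(s * t)) = 1 - Real.exp (-(s * w)) := by
    intro w
    rw [intervalIntegral.integral_eq_sub_of_hasDerivAt (f := fun t => -Real.exp (-(s * t)))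
      (fun t _ => (((hasDerivAt_id t).const_mul s).neg.exp.neg).congr_deriv (by simp; ring))
      ((by fun_prop : Continuous fun t => s * Real.exp (-(s * t))).intervalIntegrable _ _)]
    simp only [mul_zero, neg_zero, Real.exp_zero]
    ring
  have hlayer := lintegral_comp_eq_lintegral_meas_lt_mul μ (ae_of_all _ hW0) hW.aemeasurable
    (fun t _ => (by fun_prop : Continuous fun t => s * Real.exp (-(s * t))).intervalIntegrable 0 t)
    (ae_of_all _ fun t => by positivity)
  simp only [hprim] at hlayer
  have hle : ∀ ω, Real.exp (-(s * W ω)) ≤ 1 :=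
    fun ω => Real.exp_le_one_iff.2 (neg_nonpos.2 (mul_nonneg hs (hW0 ω)))
  have hint : Integrable (fun ω => Real.exp (-(s * W ω))) μ :=
    Integrable.of_bound (by fun_prop) 1 (ae_of_all _ fun ω => by
      rw [Real.norm_of_nonneg (Real.exp_pos _).le]; exact hle ω)
  have hnn : ∀ ω, 0 ≤ 1 - Real.exp (-(s * W ω)) := fun ω => sub_nonneg.2 (hle ω)
  have hsub : ∫ ω, (1 - Real.exp (-(s * W ω))) ∂μ
      = s * (lintegralLaplace (fun t => μ {ω | t < W ω}) s).toReal := by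
    rw [← ENNReal.toReal_ofReal (integral_nonneg hnn),
      ofReal_integral_eq_lintegral_ofReal (f := fun ω => 1 - Real.exp (-(s * W ω)))
        ((integrable_const 1).sub hint) (ae_of_all _ hnn),
      hlayer, lintegralLaplace, ← ENNReal.toReal_ofReal hs, ← ENNReal.toReal_mul,
      ← lintegral_const_mul' _ _ ENNReal.ofReal_ne_top, ENNReal.toReal_ofReal hs]
    congr 1
    refine setLIntegral_congr_fun measurableSet_Ioi fun t _ => ?_
    rw [ENNReal.ofReal_mul hs]
    ring
  rw [integral_sub (integrable_const 1) hint, integral_const, smul_eq_mul, mul_one] at hsub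
  linarith

/-- If a nonnegative random variable `W` satisfies the convolution equation
`P(W ≤ t) = ∫₀ᵗ P(W > t - v) v^(-1/α) dv` for all `t > 0`, where `α ∈ (1,2]` and
`1/α + 1/β = 1`, then its Laplace transform is `E[e^{-sW}] = 1/(1 + s^(1/β)/Γ(1/β))`. -/
theorem stmt0 {Ω : Type*} [MeasurableSpace Ω] (P : Measure Ω) [IsProbabilityMeasure P]
    (W : Ω → ℝ) (hWmeas : Measurable W) (hWnn : ∀ ω, 0 ≤ W ω)
    (α β : ℝ) (hα : α ∈ Set.Ioc (1:ℝ) 2) (hβ : 1/α + 1/β = 1)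
    (heq : ∀ t > (0:ℝ), (P {ω | W ω ≤ t}).toReal
      = ∫ v in Set.Ioo (0:ℝ) t, (P {ω | t - v < W ω}).toReal * v ^ (-(1/α))) :
    ∀ s > (0:ℝ),
      ∫ ω, Real.exp (-(s * W ω)) ∂P
        = 1 / (1 + (1 / Real.Gamma (1/β)) * s ^ (1/β)) := by
  intro s hs
  have hαβ : 1/β - 1 = -(1/α) := by linarith
  have hβ0 : 0 < 1/β := by linarith [(div_lt_one (one_pos.trans hα.1)).2 hα.1]
  set F : ℝ → ℝ≥0∞ := fun t => P {ω | W ω ≤ t}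
  set G : ℝ → ℝ≥0∞ := fun t => P {ω | t < W ω}
  have hFm : Measurable F := Monotone.measurable fun a b hab => measure_mono fun ω h => h.trans hab
  have hGm : Measurable G :=
    Antitone.measurable fun a b hab => measure_mono fun ω h => hab.trans_lt h
  have hFG : F + G = fun _ => 1 := funext fun t => by
    have hcompl : {ω | W ω ≤ t}ᶜ = {ω | t < W ω} := by ext; simp
    simpa [F, G, hcompl] using prob_add_prob_compl (μ := P) (s := {ω | W ω ≤ t})
      (hWmeas measurableSet_Iic)
  have hconv : EqOn F (fun t => ∫⁻ v in Ioo 0 t, G (t - v) * ENNReal.ofReal (v ^ (1/β - 1)))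
      (Ioi 0) := fun t ht => by
    simp only [F]
    rw [← ENNReal.ofReal_toReal (measure_ne_top P _), heq t ht, hαβ]
    refine ofReal_integral_toReal_mul_eq_lintegral
      (hGm.comp (measurable_const.sub measurable_id)).aemeasurable
      (ae_of_all _ fun _ => prob_le_one)
      (((intervalIntegral.intervalIntegrable_rpow' (by linarith)).1).mono_set
        (Ioo_subset_Ioc_self.trans Ioc_subset_uIoc))
      ((ae_restrict_iff' measurableSet_Ioo).2 (ae_of_all _ fun v hv => Real.rpow_nonneg hv.1.le _))
  have hB : lintegralLaplace G s * ENNReal.ofReal ((1/s) ^ (1/β) * Real.Gamma (1/β))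
      + lintegralLaplace G s = ENNReal.ofReal (1/s) := by
    rw [← lintegralLaplace_rpow hβ0 hs, ← lintegralLaplace_conv hGm (by fun_prop),
      ← lintegralLaplace_congr hconv, ← lintegralLaplace_add hFm, hFG, lintegralLaplace_one hs]
  rw [integral_exp_neg_mul_eq_sub_lintegralLaplace P hWmeas hWnn hs.le, probReal_univ,
    ENNReal.toReal_eq_div_of_mul_ofReal_add_self (by positivity) (by positivity) hB,
    Real.div_rpow zero_le_one hs.le, Real.one_rpow]
  have hΓ : 0 < Real.Gamma (1/β) := Real.Gamma_pos_of_pos hβ0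
  have hp : 0 < s ^ (1/β) := Real.rpow_pos_of_pos hs _
  field_simp
  ring
end

section
/- Let (Xᵢ) be i.i.d. real random variables with partial sums Sₙ = X₁ + ⋯ + Xₙ, and suppose Σₙ P(|Sₙ| < εₙ) < ∞ for a sequence εₙ ↓ 0. Define τ̃_ε = min{n ≥ 1 : |Sₙ| < ε}. Then almost surely on the event Ω* = {Sₙ ≠ 0 for all n ≥ 1}, eventually (for all large n) τ̃_{εₙ} > n. -/
/-!
Borel–Cantelli gives, almost surely, an `N` with `εₙ ≤ |Sₙ|` for all `n ≥ N`. For `N ≤ k ≤ n`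
monotonicity of `ε` then gives `εₙ ≤ ε_k ≤ |S_k|`, while on `Ω*` the finitely many values
`|S_k|`, `1 ≤ k ≤ N`, are positive, so `εₙ → 0` eventually drops below all of them.
-/

open MeasureTheory ProbabilityTheory Filter Set Finset

theorem eventually_forall_le_abs_of_ne_zero {s ε : ℕ → ℝ} (hs : ∀ k ≥ 1, s k ≠ 0)
    (hεanti : Antitone ε) (hεlim : Tendsto ε atTop (nhds 0))
    (hev : ∀ᶠ n in atTop, ε n ≤ |s n|) :
    ∀ᶠ n in atTop, ∀ k, 1 ≤ k → k ≤ n → ε n ≤ |s k| := by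
  obtain ⟨N, hN⟩ := eventually_atTop.mp hev
  have hsmall : ∀ᶠ n in atTop, ∀ k ∈ Finset.Icc 1 N, ε n ≤ |s k| :=
    (eventually_all_finset _).2 fun k hk =>
      hεlim.eventually (ge_mem_nhds (abs_pos.2 (hs k (Finset.mem_Icc.1 hk).1)))
  filter_upwards [hsmall] with n hn k hk1 hkn
  rcases le_total k N with hkN | hNk
  · exact hn k (Finset.mem_Icc.2 ⟨hk1, hkN⟩)
  · exact (hεanti hkn).trans (hN k hNk)

theorem stmt8_general {Ω : Type*} [MeasurableSpace Ω] (P : Measure Ω)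
    (S : ℕ → Ω → ℝ)
    (ε : ℕ → ℝ) (hεanti : Antitone ε)
    (hεlim : Tendsto ε atTop (nhds 0))
    (hsum : ∑' n, P {ω | |S n ω| < ε n} ≠ ⊤) :
    ∀ᵐ ω ∂P, (∀ n ≥ 1, S n ω ≠ 0) →
      ∀ᶠ n in atTop, ∀ k, 1 ≤ k → k ≤ n → ε n ≤ |S k ω| := by
  filter_upwards [ae_eventually_notMem hsum] with ω hω hne
  exact eventually_forall_le_abs_of_ne_zero hne hεanti hεlim (hω.mono fun _ h => not_lt.1 h)

/-- Borel–Cantelli step: if `(Xᵢ)` are i.i.d. with partial sums `Sₙ` and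
`Σₙ P(|Sₙ| < εₙ) < ∞` for a positive sequence `εₙ ↓ 0`, then almost surely on
`Ω* = {Sₙ ≠ 0 ∀ n ≥ 1}` one eventually has `τ̃_{εₙ} > n`, i.e. `|S_k| ≥ εₙ` for
all `1 ≤ k ≤ n`. -/
theorem stmt8 {Ω : Type*} [MeasurableSpace Ω] (P : Measure Ω) [IsProbabilityMeasure P]
    (X : ℕ → Ω → ℝ) (hmeas : ∀ i, Measurable (X i))
    (hindep : iIndepFun X P)
    (hident : ∀ i, IdentDistrib (X i) (X 0) P P)
    (S : ℕ → Ω → ℝ) (hS : ∀ n ω, S n ω = ∑ i ∈ Finset.range n, X i ω)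
    (ε : ℕ → ℝ) (hεpos : ∀ n, 0 < ε n) (hεanti : Antitone ε)
    (hεlim : Tendsto ε atTop (nhds 0))
    (hsum : ∑' n, P {ω | |S n ω| < ε n} ≠ ⊤) :
    ∀ᵐ ω ∂P, (∀ n ≥ 1, S n ω ≠ 0) →
      ∀ᶠ n in atTop, ∀ k, 1 ≤ k → k ≤ n → ε n ≤ |S k ω| :=
  stmt8_general P S ε hεanti hεlim hsum
end

section
/- Let (Xᵢ) be i.i.d. real random variables with partial sums Sₙ, fix ε > 0, n ≥ 1, and integers 1 ≤ m ≤ n. Define τ̃_{2ε} = min{k ≥ 1 : |S_k| < 2ε} and the pairwise disjoint events E_k = {|S_k| < ε and |S_j − S_k| > 2ε for all j = k+1,…,n}. Then 1 ≥ Σ_{k=m}^{n} P(|S_k| < ε) · P(τ̃_{2ε} > n − k). -/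
/-!
For `k ≤ n` let `E_k` be the event that the walk is within `ε` of the origin at time `k` and
afterwards, up to time `n`, stays at distance at least `2ε` from `S_k`. Two such events with
`a < b` cannot occur together, since `|S_b - S_a| < 2ε`; hence their probabilities sum to at
most `1`. The condition at time `k` depends on `X_0, …, X_{k-1}` and the later one on
`X_k, X_{k+1}, …`, so they are independent, and the shifted sequence `(X_{k+i})_i` has the law of
`(X_i)_i`, so `P(E_k) = P(|S_k| < ε) · P(τ̃_{2ε} > n - k)`.
-/

open MeasureTheory ProbabilityTheory Filter Set Finset

lemma MeasurableSpace.comap_tuple_le_biSup_comap {Ω ι κ E : Type*} [mE : MeasurableSpace E]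
    (X : κ → Ω → E) (g : ι → κ) {T : Set κ} (hg : ∀ i, g i ∈ T) :
    MeasurableSpace.comap (fun ω i ↦ X (g i) ω) MeasurableSpace.pi ≤
      ⨆ j ∈ T, MeasurableSpace.comap (X j) mE := by
  simp_rw [MeasurableSpace.pi, MeasurableSpace.comap_iSup, MeasurableSpace.comap_comp,
    Function.comp_def]
  exact iSup_le fun i ↦ le_iSup₂_of_le (g i) (hg i) le_rfl

namespace ProbabilityTheory

section Shift

variable {Ω E : Type*} [MeasurableSpace Ω] [MeasurableSpace E] {P : Measure Ω} {X : ℕ → Ω → E}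

lemma iIndepFun.identDistrib_shift (hindep : iIndepFun X P)
    (hident : ∀ i, IdentDistrib (X i) (X 0) P P) (k : ℕ) :
    IdentDistrib (fun ω i ↦ X (k + i) ω) (fun ω i ↦ X i ω) P P :=
  .pi (fun i ↦ (hident (k + i)).trans (hident i).symm) (hindep.precomp (add_right_injective k))
    hindep

lemma iIndepFun.indepFun_initial_shift (hmeas : ∀ i, Measurable (X i)) (hindep : iIndepFun X P)
    (k : ℕ) : IndepFun (fun ω (i : Fin k) ↦ X i ω) (fun ω i ↦ X (k + i) ω) P :=
  (IndepFun_iff_Indep _ _ _).mpr <| indep_of_indep_of_le_right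
    (indep_of_indep_of_le_left
      (indep_iSup_of_disjoint (fun i ↦ (hmeas i).comap_le) ((iIndepFun_iff_iIndep _ _ _).mp hindep)
        (Set.Iio_disjoint_Ici le_rfl (a := k)))
      (MeasurableSpace.comap_tuple_le_biSup_comap X _ fun i ↦ Set.mem_Iio.mpr i.2))
    (MeasurableSpace.comap_tuple_le_biSup_comap X _ fun i ↦ Set.mem_Ici.mpr (k.le_add_right i))

end Shift

/-- The event `τ̃_δ > r` for the random walk with increments `x`. -/
def staysAwayUpTo (δ : ℝ) (r : ℕ) : Set (ℕ → ℝ) :=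
  {x | ∀ j, 1 ≤ j → j ≤ r → δ ≤ |∑ i ∈ range j, x i|}

lemma measurableSet_staysAwayUpTo (δ : ℝ) (r : ℕ) : MeasurableSet (staysAwayUpTo δ r) := by
  simp only [staysAwayUpTo, Set.ofPred_forall]
  exact .iInter fun j ↦ .iInter fun _ ↦ .iInter fun _ ↦
    measurableSet_le measurable_const (by fun_prop)

section Walk

variable {Ω : Type*} {X S : ℕ → Ω → ℝ}

lemma setOf_staysAway_eq_preimage (hS : ∀ n ω, S n ω = ∑ i ∈ range n, X i ω) (δ : ℝ) (r : ℕ) :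
    {ω | ∀ j, 1 ≤ j → j ≤ r → δ ≤ |S j ω|} = (fun ω i ↦ X i ω) ⁻¹' staysAwayUpTo δ r := by
  simp only [staysAwayUpTo, hS]
  rfl

lemma setOf_staysAway_sub_eq_preimage (hS : ∀ n ω, S n ω = ∑ i ∈ range n, X i ω) (δ : ℝ)
    (k r : ℕ) :
    {ω | ∀ j, 1 ≤ j → j ≤ r → δ ≤ |S (k + j) ω - S k ω|} =
      (fun ω i ↦ X (k + i) ω) ⁻¹' staysAwayUpTo δ r := by
  simp only [staysAwayUpTo, hS, sum_range_add, add_sub_cancel_left]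
  rfl

lemma setOf_abs_lt_eq_preimage (hS : ∀ n ω, S n ω = ∑ i ∈ range n, X i ω) (ε : ℝ) (k : ℕ) :
    {ω | |S k ω| < ε} = (fun ω (i : Fin k) ↦ X i ω) ⁻¹' {v | |∑ i, v i| < ε} := by
  simp only [hS, ← Fin.sum_univ_eq_sum_range]
  rfl

/-- The event `E_k`. -/
def lastNearVisit (S : ℕ → Ω → ℝ) (ε : ℝ) (n k : ℕ) : Set Ω :=
  {ω | |S k ω| < ε} ∩ {ω | ∀ j, 1 ≤ j → j ≤ n - k → 2 * ε ≤ |S (k + j) ω - S k ω|}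

lemma disjoint_lastNearVisit {ε : ℝ} {n a b : ℕ} (hab : a < b) (hbn : b ≤ n) :
    Disjoint (lastNearVisit S ε n a) (lastNearVisit S ε n b) := by
  refine Set.disjoint_left.mpr fun ω ⟨hnear_a, haway⟩ ⟨hnear_b, _⟩ ↦ ?_
  have hfar := haway (b - a) (by omega) (by omega)
  rw [Nat.add_sub_cancel' hab.le] at hfar
  linarith [abs_sub (S b ω) (S a ω), hnear_a.out, hnear_b.out]

lemma pairwiseDisjoint_lastNearVisit (ε : ℝ) (n : ℕ) :
    (Set.Iic n).PairwiseDisjoint (lastNearVisit S ε n) := fun _ ha _ hb hne ↦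
  hne.lt_or_gt.elim (fun h ↦ disjoint_lastNearVisit h hb) fun h ↦ (disjoint_lastNearVisit h ha).symm

variable [MeasurableSpace Ω] {P : Measure Ω}

lemma measurableSet_lastNearVisit (hS : ∀ k, Measurable (S k)) (ε : ℝ) (n k : ℕ) :
    MeasurableSet (lastNearVisit S ε n k) := by
  simp only [lastNearVisit, Set.ofPred_forall]
  exact (measurableSet_lt (by fun_prop) measurable_const).inter <|
    .iInter fun j ↦ .iInter fun _ ↦ .iInter fun _ ↦ measurableSet_le measurable_const (by fun_prop)

lemma measure_lastNearVisit (hS : ∀ n ω, S n ω = ∑ i ∈ range n, X i ω)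
    (hmeas : ∀ i, Measurable (X i)) (hindep : iIndepFun X P)
    (hident : ∀ i, IdentDistrib (X i) (X 0) P P) (ε : ℝ) (n k : ℕ) :
    P (lastNearVisit S ε n k) =
      P {ω | |S k ω| < ε} * P {ω | ∀ j, 1 ≤ j → j ≤ n - k → 2 * ε ≤ |S j ω|} := by
  have hfuture := measurableSet_staysAwayUpTo (2 * ε) (n - k)
  rw [lastNearVisit, setOf_abs_lt_eq_preimage hS, setOf_staysAway_sub_eq_preimage hS,
    setOf_staysAway_eq_preimage hS,
    (hindep.indepFun_initial_shift hmeas k).measure_inter_preimage_eq_mul _ _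
      (measurableSet_lt (by fun_prop) measurable_const) hfuture,
    ← (hindep.identDistrib_shift hident k).measure_mem_eq hfuture]

end Walk

end ProbabilityTheory

theorem stmt9_general {Ω : Type*} [MeasurableSpace Ω] (P : Measure Ω) [IsProbabilityMeasure P]
    (X : ℕ → Ω → ℝ) (hmeas : ∀ i, Measurable (X i))
    (hindep : iIndepFun X P)
    (hident : ∀ i, IdentDistrib (X i) (X 0) P P)
    (S : ℕ → Ω → ℝ) (hS : ∀ n ω, S n ω = ∑ i ∈ Finset.range n, X i ω)
    (ε : ℝ) (m n : ℕ) :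
    ∑ k ∈ Finset.Icc m n,
        (P {ω | |S k ω| < ε}).toReal *
          (P {ω | ∀ i, 1 ≤ i → i ≤ n - k → 2 * ε ≤ |S i ω|}).toReal ≤ 1 := by
  have hSmeas (k : ℕ) : Measurable (S k) := by
    rw [show S k = fun ω ↦ ∑ i ∈ range k, X i ω from funext (hS k)]
    fun_prop
  calc _ = ∑ k ∈ Finset.Icc m n, P.real (lastNearVisit S ε n k) := by
        refine sum_congr rfl fun k _ ↦ ?_
        rw [measureReal_def, measure_lastNearVisit hS hmeas hindep hident, ENNReal.toReal_mul]
    _ = P.real (⋃ k ∈ Finset.Icc m n, lastNearVisit S ε n k) :=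
        (measureReal_biUnion_finset (μ := P) ((pairwiseDisjoint_lastNearVisit ε n).subset fun k hk ↦
          (Finset.mem_Icc.mp hk).2) fun k _ ↦ measurableSet_lastNearVisit hSmeas ε n k).symm
    _ ≤ 1 := measureReal_le_one

/-- Dvoretzky–Erdős estimate: for an i.i.d. walk `Sₙ`, `ε > 0` and `1 ≤ m ≤ n`,
`1 ≥ Σ_{k=m}^n P(|S_k| < ε) · P(τ̃_{2ε} > n-k)`, where `τ̃_{2ε} > j` means that
`|S_i| ≥ 2ε` for all `1 ≤ i ≤ j`. -/
theorem stmt9 {Ω : Type*} [MeasurableSpace Ω] (P : Measure Ω) [IsProbabilityMeasure P]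
    (X : ℕ → Ω → ℝ) (hmeas : ∀ i, Measurable (X i))
    (hindep : iIndepFun X P)
    (hident : ∀ i, IdentDistrib (X i) (X 0) P P)
    (S : ℕ → Ω → ℝ) (hS : ∀ n ω, S n ω = ∑ i ∈ Finset.range n, X i ω)
    (ε : ℝ) (hε : 0 < ε) (m n : ℕ) (hm : 1 ≤ m) (hmn : m ≤ n) :
    ∑ k ∈ Finset.Icc m n,
        (P {ω | |S k ω| < ε}).toReal *
          (P {ω | ∀ i, 1 ≤ i → i ≤ n - k → 2 * ε ≤ |S i ω|}).toReal ≤ 1 :=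
  stmt9_general P X hmeas hindep hident S hS ε m n
end

section
/- Suppose (Aₙ) is regularly varying of index 1 (the case α = 1) with Σ 1/Aₙ = ∞ and G(n) = Σ_{k=1}^n 1/A_k. Then n/Aₙ = o(G(n)) as n → ∞, and moreover G is slowly varying: G(2n)/G(n) → 1, hence G(2n) − G(n) = o(G(n)). -/
/-!
Fatou's lemma applied to `l ↦ A j / A ⌊l j⌋ → 1/l` on `[1, 2)` gives, for large `j`, the block
bound `j / A j ≤ 4 ∑_{j ≤ k < 2j} 1 / A k`; this replaces the uniform convergence theorem.
Combined with `A (n / 2c) ≈ A n / 2c`, each dyadic block `[n / 2^(i+1), n / 2^i)` contributes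
at least `n / (16 A n)` to `G n`, and `J` such blocks show `n / A n ≤ (16 / J) G n`.
Then `1 / A k = o(G k / k)` bounds `G (2n) - G n` by `δ G (2n)`, so `G (2n) / G n → 1`.
-/

open Filter Set Finset MeasureTheory Topology

theorem setLIntegral_Ico_comp_floor_mul (g : ℕ → ENNReal) {j : ℕ} (hj : 0 < j) {a b : ℕ}
    (hab : a ≤ b) :
    ∫⁻ l in Set.Ico ((a : ℝ) / j) (b / j), g ⌊l * j⌋₊ =
      ∑ k ∈ Finset.Ico a b, g k * ENNReal.ofReal (1 / j) := by
  have hj' : (0 : ℝ) < j := by exact_mod_cast hj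
  induction b, hab using Nat.le_induction with
  | base => simp
  | succ b hab ih =>
    have hfloor : EqOn (fun l : ℝ => g ⌊l * j⌋₊) (fun _ => g b)
        (Set.Ico ((b : ℝ) / j) ((b + 1) / j)) := by
      rintro l ⟨hl₁, hl₂⟩
      rw [div_le_iff₀ hj'] at hl₁
      rw [lt_div_iff₀ hj'] at hl₂
      exact congrArg g ((Nat.floor_eq_iff ((Nat.cast_nonneg b).trans hl₁)).2 ⟨hl₁, hl₂⟩)
    rw [Nat.cast_succ, ← Ico_union_Ico_eq_Ico (b := (b : ℝ) / j) (by gcongr)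
      (by gcongr; linarith), lintegral_union measurableSet_Ico (Ico_disjoint_Ico_same),
      ih, setLIntegral_congr_fun measurableSet_Ico hfloor, setLIntegral_const, Real.volume_Ico,
      Finset.sum_Ico_succ_top hab, ← sub_div, add_sub_cancel_left]

theorem eventually_div_le_four_mul_sum_Ico (A : ℕ → ℝ) (hA : ∀ n ≥ 1, 0 < A n)
    (hreg : ∀ l ∈ Set.Ico (1 : ℝ) 2, Tendsto (fun n : ℕ => A ⌊l * n⌋₊ / A n) atTop (𝓝 l)) :
    ∀ᶠ j : ℕ in atTop, (j : ℝ) / A j ≤ 4 * ∑ k ∈ Finset.Ico j (2 * j), 1 / A k := by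
  set f : ℕ → ℝ → ENNReal := fun j l => ENNReal.ofReal (A j / A ⌊l * j⌋₊)
  have hf_meas : ∀ j, Measurable (f j) := fun j =>
    ENNReal.measurable_ofReal.comp <| measurable_const.div <|
      (measurable_from_nat (f := A)).comp (measurable_id.mul_const _).nat_floor
  have hf_lim : ∀ l ∈ Set.Ico (1 : ℝ) 2, liminf (fun j => f j l) atTop = ENNReal.ofReal l⁻¹ := by
    intro l hl
    refine (ENNReal.tendsto_ofReal ?_).liminf_eq
    simpa only [inv_div] using (hreg l hl).inv₀ (by linarith [hl.1])
  have hfatou : ENNReal.ofReal 2⁻¹ ≤ liminf (fun j => ∫⁻ l in Set.Ico 1 2, f j l) atTop := calc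
    ENNReal.ofReal 2⁻¹ = ∫⁻ _ in Set.Ico (1 : ℝ) 2, ENNReal.ofReal 2⁻¹ := by
      rw [setLIntegral_const, Real.volume_Ico]; norm_num
    _ ≤ ∫⁻ l in Set.Ico 1 2, liminf (fun j => f j l) atTop := by
      refine setLIntegral_mono' measurableSet_Ico fun l hl => ?_
      rw [hf_lim l hl]
      exact ENNReal.ofReal_le_ofReal (inv_anti₀ (by linarith [hl.1]) hl.2.le)
    _ ≤ _ := lintegral_liminf_le hf_meas
  filter_upwards [eventually_lt_of_lt_liminf (lt_of_lt_of_le (by norm_num) hfatou)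
    (b := ENNReal.ofReal 4⁻¹), eventually_ge_atTop 1] with j hj hj1
  have hAj := hA j hj1
  have hint : ∫⁻ l in Set.Ico 1 2, f j l =
      ENNReal.ofReal (A j / j * ∑ k ∈ Finset.Ico j (2 * j), 1 / A k) := by
    have hj0 : (j : ℝ) ≠ 0 := by positivity
    have := setLIntegral_Ico_comp_floor_mul (fun k => ENNReal.ofReal (A j / A k)) hj1
      (by omega : j ≤ 2 * j)
    rw [Nat.cast_mul, Nat.cast_two, div_self hj0, mul_div_cancel_right₀ _ hj0] at this
    rw [this, Finset.mul_sum, ENNReal.ofReal_sum_of_nonneg]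
    · refine Finset.sum_congr rfl fun k hk => ?_
      have hAk := hA k (hj1.trans (Finset.mem_Ico.1 hk).1)
      rw [← ENNReal.ofReal_mul (by positivity)]
      congr 1
      field_simp
    · intro k hk
      have hAk := hA k (hj1.trans (Finset.mem_Ico.1 hk).1)
      positivity
  rw [hint, ENNReal.ofReal_lt_ofReal_iff'] at hj
  have := hj.1
  rw [div_mul_eq_mul_div, lt_div_iff₀ (by positivity)] at this
  rw [div_le_iff₀ hAj]
  linarith

theorem sum_range_sum_Ico_of_antitone {M : Type*} [AddCommMonoid M] (g : ℕ → M) {f : ℕ → ℕ}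
    (hf : Antitone f) (J : ℕ) :
    ∑ i ∈ Finset.range J, ∑ k ∈ Finset.Ico (f (i + 1)) (f i), g k =
      ∑ k ∈ Finset.Ico (f J) (f 0), g k := by
  induction J with
  | zero => simp
  | succ J ih =>
    rw [Finset.sum_range_succ, ih, add_comm,
      Finset.sum_Ico_consecutive g (hf J.le_succ) (hf J.zero_le)]

theorem eventually_div_le_sixteen_mul_sum_Ico_div (A : ℕ → ℝ) (hA : ∀ n ≥ 1, 0 < A n)
    (hreg : ∀ l > (0 : ℝ), Tendsto (fun n : ℕ => A ⌊l * n⌋₊ / A n) atTop (𝓝 l))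
    {c : ℕ} (hc : 0 < c) :
    ∀ᶠ n : ℕ in atTop, (n : ℝ) / A n ≤ 16 * ∑ k ∈ Finset.Ico (n / (2 * c)) (n / c), 1 / A k := by
  have hc' : (0 : ℝ) < c := by exact_mod_cast hc
  have hfloor : ∀ n : ℕ, ⌊(2 * c : ℝ)⁻¹ * n⌋₊ = n / (2 * c) := fun n => by
    rw [inv_mul_eq_div, show (2 * c : ℝ) = ((2 * c : ℕ) : ℝ) by push_cast; rfl,
      Nat.floor_div_natCast, Nat.floor_natCast]
  have hratio : ∀ᶠ n : ℕ in atTop, A (n / (2 * c)) / A n < (c : ℝ)⁻¹ := by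
    have := (hreg (2 * c : ℝ)⁻¹ (by positivity)).eventually_lt_const
      (u := (c : ℝ)⁻¹) (by rw [mul_inv]; linarith [inv_pos.2 hc'])
    simpa only [hfloor] using this
  filter_upwards [hratio, eventually_ge_atTop (2 * c),
    (Nat.tendsto_div_const_atTop (by omega : 2 * c ≠ 0)).eventually
      (eventually_div_le_four_mul_sum_Ico A hA fun l hl => hreg l (by linarith [hl.1]))]
    with n hn_ratio hn_ge hn_block
  set m := n / (2 * c)
  have hm : 1 ≤ m := (Nat.one_le_div_iff (by omega)).2 hn_ge
  have hn_le : n ≤ 4 * c * m := by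
    have : n < 2 * c * (m + 1) := Nat.lt_mul_div_succ n (by omega)
    nlinarith
  have hm_le : 2 * m ≤ n / c := by
    have : m * (2 * c) ≤ n := Nat.div_mul_le_self n (2 * c)
    exact (Nat.le_div_iff_mul_le hc).2 (by linarith)
  have hAn := hA n (by omega)
  have hAm := hA m hm
  have hsub : ∑ k ∈ Finset.Ico m (2 * m), 1 / A k ≤ ∑ k ∈ Finset.Ico m (n / c), 1 / A k :=
    Finset.sum_le_sum_of_subset_of_nonneg (Finset.Ico_subset_Ico_right hm_le)
      fun k hk _ => (one_div_pos.2 (hA k (hm.trans (Finset.mem_Ico.1 hk).1))).le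
  have hcA : c * A m ≤ A n := by
    rw [div_lt_iff₀ hAn, inv_mul_eq_div, lt_div_iff₀ hc'] at hn_ratio
    linarith
  calc (n : ℝ) / A n ≤ 4 * c * m / A n := by gcongr; exact_mod_cast hn_le
    _ ≤ 4 * c * m / (c * A m) := by gcongr
    _ = 4 * (m / A m) := by field_simp
    _ ≤ 16 * ∑ k ∈ Finset.Ico (n / (2 * c)) (n / c), 1 / A k := by linarith

theorem isLittleO_div_sum_Icc_one_div (A : ℕ → ℝ) (hA : ∀ n ≥ 1, 0 < A n)
    (hreg : ∀ l > (0 : ℝ), Tendsto (fun n : ℕ => A ⌊l * n⌋₊ / A n) atTop (𝓝 l)) :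
    (fun n : ℕ => (n : ℝ) / A n) =o[atTop] fun n => ∑ k ∈ Finset.Icc 1 n, 1 / A k := by
  refine Asymptotics.isLittleO_iff.2 fun ε hε => ?_
  set J := ⌈16 / ε⌉₊
  have hJ : 16 / ε ≤ J := Nat.le_ceil _
  have hblocks : ∀ᶠ n : ℕ in atTop, ∀ i ∈ Finset.range J,
      (n : ℝ) / A n ≤ 16 * ∑ k ∈ Finset.Ico (n / 2 ^ (i + 1)) (n / 2 ^ i), 1 / A k := by
    refine (eventually_all_finset _).2 fun i _ => ?_
    simpa only [pow_succ'] using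
      eventually_div_le_sixteen_mul_sum_Ico_div A hA hreg (pow_pos two_pos i)
  filter_upwards [hblocks, eventually_ge_atTop (2 ^ J)] with n hn_blocks hn_ge
  have hAn := hA n (Nat.one_le_two_pow.trans hn_ge)
  have hsum : J * ((n : ℝ) / A n) ≤ 16 * ∑ k ∈ Finset.Ico (n / 2 ^ J) n, 1 / A k := by
    have := Finset.sum_le_sum hn_blocks
    rw [← Finset.mul_sum, sum_range_sum_Ico_of_antitone _
      (fun i j hij => Nat.div_le_div_left (Nat.pow_le_pow_right two_pos hij) (by positivity)) J,
      Finset.sum_const, Finset.card_range, nsmul_eq_mul, pow_zero, Nat.div_one] at this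
    exact this
  have hsub : ∑ k ∈ Finset.Ico (n / 2 ^ J) n, 1 / A k ≤ ∑ k ∈ Finset.Icc 1 n, 1 / A k := by
    have : 1 ≤ n / 2 ^ J := (Nat.one_le_div_iff (by positivity)).2 hn_ge
    refine Finset.sum_le_sum_of_subset_of_nonneg (fun k hk => ?_) fun k hk _ => ?_
    · simp only [Finset.mem_Ico, Finset.mem_Icc] at hk ⊢; omega
    · exact (one_div_pos.2 (hA k (Finset.mem_Icc.1 hk).1)).le
  rw [Real.norm_of_nonneg (by positivity), Real.norm_of_nonneg (Finset.sum_nonneg fun k hk =>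
    (one_div_pos.2 (hA k (Finset.mem_Icc.1 hk).1)).le)]
  have h16 : 16 ≤ ε * J := by rwa [div_le_iff₀ hε, mul_comm] at hJ
  nlinarith [mul_le_mul_of_nonneg_right h16 (by positivity : 0 ≤ (n : ℝ) / A n),
    mul_le_mul_of_nonneg_left (hsum.trans (mul_le_mul_of_nonneg_left hsub (by norm_num))) hε.le]

theorem sum_Icc_one_two_mul_sub (a : ℕ → ℝ) (n : ℕ) :
    ∑ k ∈ Finset.Icc 1 (2 * n), a k - ∑ k ∈ Finset.Icc 1 n, a k =
      ∑ k ∈ Finset.Ioc n (2 * n), a k := by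
  simp only [show ∀ m, Finset.Icc 1 m = Finset.Ioc 0 m from Finset.Icc_add_one_left_eq_Ioc 0]
  rw [← Finset.sum_Ioc_consecutive a n.zero_le (by omega : n ≤ 2 * n), add_sub_cancel_left]

theorem isLittleO_sum_Ioc_two_mul (a : ℕ → ℝ) (ha : ∀ k ≥ 1, 0 ≤ a k)
    (h : (fun k : ℕ => k * a k) =o[atTop] fun n => ∑ k ∈ Finset.Icc 1 n, a k) :
    (fun n => ∑ k ∈ Finset.Ioc n (2 * n), a k) =o[atTop] fun n => ∑ k ∈ Finset.Icc 1 n, a k := by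
  set S : ℕ → ℝ := fun n => ∑ k ∈ Finset.Icc 1 n, a k
  have hS_nonneg : ∀ n, 0 ≤ S n := fun n =>
    Finset.sum_nonneg fun k hk => ha k (Finset.mem_Icc.1 hk).1
  have hS_mono : Monotone S := fun m n hmn =>
    Finset.sum_le_sum_of_subset_of_nonneg (Finset.Icc_subset_Icc_right hmn)
      fun k hk _ => ha k (Finset.mem_Icc.1 hk).1
  refine Asymptotics.isLittleO_iff.2 fun c hc => ?_
  set δ := c / (1 + c)
  obtain ⟨N, hN⟩ := eventually_atTop.1 (Asymptotics.isLittleO_iff.1 h (by positivity : 0 < δ))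
  filter_upwards [eventually_ge_atTop (max N 1)] with n hn
  have hterm : ∀ k ∈ Finset.Ioc n (2 * n), n * a k ≤ δ * S (2 * n) := by
    intro k hk
    obtain ⟨hnk, hk2n⟩ := Finset.mem_Ioc.1 hk
    have hak := ha k (Nat.one_le_of_lt hnk)
    have := hN k (by omega)
    rw [Real.norm_of_nonneg (by positivity), Real.norm_of_nonneg (hS_nonneg k)] at this
    calc (n : ℝ) * a k ≤ k * a k := by gcongr
      _ ≤ δ * S k := this
      _ ≤ δ * S (2 * n) := by gcongr; exact hS_mono hk2n
  have hD : ∑ k ∈ Finset.Ioc n (2 * n), a k ≤ δ * S (2 * n) := by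
    have := Finset.sum_le_card_nsmul _ _ _ hterm
    rw [← Finset.mul_sum, Nat.card_Ioc, nsmul_eq_mul, show 2 * n - n = n by omega] at this
    exact le_of_mul_le_mul_left this (by exact_mod_cast (by omega : 0 < n))
  have hsplit : S (2 * n) - S n = _ := sum_Icc_one_two_mul_sub a n
  rw [div_mul_eq_mul_div, le_div_iff₀ (by positivity), ← sub_add_cancel (S (2 * n)) (S n),
    hsplit] at hD
  rw [Real.norm_of_nonneg (Finset.sum_nonneg fun k hk =>
      ha k (Nat.one_le_of_lt (Finset.mem_Ioc.1 hk).1)),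
    Real.norm_of_nonneg (hS_nonneg n)]
  linarith

theorem stmt16_general (A : ℕ → ℝ) (hA : ∀ n ≥ 1, 0 < A n)
    (hreg : ∀ l > (0:ℝ), Tendsto (fun n : ℕ => A ⌊l * n⌋₊ / A n) atTop (nhds l))
    (G : ℕ → ℝ) (hG : ∀ n, G n = ∑ k ∈ Finset.Icc 1 n, 1 / A k) :
    Tendsto (fun n : ℕ => (n : ℝ) / (A n * G n)) atTop (nhds 0)
    ∧ Tendsto (fun n : ℕ => G (2 * n) / G n) atTop (nhds 1)
    ∧ Tendsto (fun n : ℕ => (G (2 * n) - G n) / G n) atTop (nhds 0) := by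
  obtain rfl : G = fun n => ∑ k ∈ Finset.Icc 1 n, 1 / A k := funext hG
  have hsmall := isLittleO_div_sum_Icc_one_div A hA hreg
  have hdouble := isLittleO_sum_Ioc_two_mul (fun k => 1 / A k)
    (fun k hk => (one_div_pos.2 (hA k hk)).le) (by simpa only [mul_one_div] using hsmall)
  have hincr : Tendsto (fun n : ℕ => (∑ k ∈ Finset.Icc 1 (2 * n), 1 / A k -
      ∑ k ∈ Finset.Icc 1 n, 1 / A k) / ∑ k ∈ Finset.Icc 1 n, 1 / A k) atTop (𝓝 0) := by
    simpa only [sum_Icc_one_two_mul_sub] using hdouble.tendsto_div_nhds_zero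
  refine ⟨by simpa only [div_div] using hsmall.tendsto_div_nhds_zero, ?_, hincr⟩
  have hone := hincr.const_add 1
  rw [add_zero] at hone
  refine hone.congr' ?_
  filter_upwards [eventually_ge_atTop 1] with n hn
  have hpos : 0 < ∑ k ∈ Finset.Icc 1 n, 1 / A k :=
    Finset.sum_pos (fun k hk => one_div_pos.2 (hA k (Finset.mem_Icc.1 hk).1))
      (Finset.nonempty_Icc.2 hn)
  rw [sub_div, div_self hpos.ne', add_sub_cancel]

/-- If `(Aₙ)` is positive and regularly varying of index `1` with
`G(n) = Σ_{k=1}^n 1/A_k → ∞`, then `n/Aₙ = o(G(n))` and `G` is slowly varying: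
`G(2n)/G(n) → 1`, hence `G(2n) - G(n) = o(G(n))`. -/
theorem stmt16 (A : ℕ → ℝ) (hA : ∀ n ≥ 1, 0 < A n)
    (hreg : ∀ l > (0:ℝ), Tendsto (fun n : ℕ => A ⌊l * n⌋₊ / A n) atTop (nhds l))
    (G : ℕ → ℝ) (hG : ∀ n, G n = ∑ k ∈ Finset.Icc 1 n, 1 / A k)
    (hdiv : Tendsto G atTop atTop) :
    Tendsto (fun n : ℕ => (n : ℝ) / (A n * G n)) atTop (nhds 0)
    ∧ Tendsto (fun n : ℕ => G (2 * n) / G n) atTop (nhds 1)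
    ∧ Tendsto (fun n : ℕ => (G (2 * n) - G n) / G n) atTop (nhds 0) :=
  stmt16_general A hA hreg G hG
end
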